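/- Let m_1 = x^a and m'' = x^c be monomials in k[x_1,…,x_n] with partial sums b_i = Σ_{j≤i} a_j and d_i = Σ_{j≤i} c_j. If B(m'') is not contained in the ideal ( x_{i, b_i+1} : 1 ≤ i ≤ n ) of Ŝ, then b_i ≥ d_i for all i. -/

import Mathlib

open MvPolynomial CategoryTheory

namespace Pol


/-- Total degree of an exponent vector. -/
def degE {σ : Type} (a : σ →₀ ℕ) : ℕ := a.sum fun _ e => e

/-- `I` is a monomial ideal. -/
def IsMonomialIdeal {σ k : Type} [CommRing k] (I : Ideal (MvPolynomial σ k)) : Prop :=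
  ∃ A : Set (σ →₀ ℕ), I = Ideal.span ((fun a => (monomial a 1 : MvPolynomial σ k)) '' A)

/-- `I` is a squarefree monomial ideal. -/
def IsSquarefreeMonomialIdeal {σ k : Type} [CommRing k] (I : Ideal (MvPolynomial σ k)) : Prop :=
  ∃ A : Set (σ →₀ ℕ), (∀ a ∈ A, ∀ i, a i ≤ 1) ∧
    I = Ideal.span ((fun a => (monomial a 1 : MvPolynomial σ k)) '' A)

/-- Borel fixed (strongly stable) exchange property: `m ∈ I`, `x_i ∣ m`, `j < i`
implies `(x_j/x_i)·m ∈ I`. -/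
def IsBorelFixed {n : ℕ} {k : Type} [CommRing k] (I : Ideal (MvPolynomial (Fin n) k)) : Prop :=
  ∀ a : Fin n →₀ ℕ, (monomial a 1 : MvPolynomial (Fin n) k) ∈ I →
    ∀ i j : Fin n, j < i → a i ≠ 0 →
      (monomial (a + Finsupp.single j 1 - Finsupp.single i 1) 1 : MvPolynomial (Fin n) k) ∈ I

/-- `x^a` is a minimal generator of the monomial ideal `I`. -/
def IsMinGen {σ k : Type} [CommRing k] (I : Ideal (MvPolynomial σ k)) (a : σ →₀ ℕ) : Prop :=
  (monomial a 1 : MvPolynomial σ k) ∈ I ∧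
    ∀ i : σ, a i ≠ 0 → (monomial (a - Finsupp.single i 1) 1 : MvPolynomial σ k) ∉ I

/-- partial sum `b_i = a_1 + ⋯ + a_i` (cutoff `i : ℕ`, counting the first `i` variables). -/
def psum {n : ℕ} (a : Fin n →₀ ℕ) (i : ℕ) : ℕ :=
  ∑ j ∈ Finset.univ.filter (fun j : Fin n => (j : ℕ) < i), a j

/-- The exponent vector of `B(x^a)`: the variables `x_{i,j}` with
`b_{i-1}+1 ≤ j ≤ b_i` (in 0-indexed form `b_{i-1} ≤ j < b_i`). -/
noncomputable def boxExp {n : ℕ} (d : ℕ) (a : Fin n →₀ ℕ) : (Fin n × Fin d) →₀ ℕ :=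
  ∑ p ∈ Finset.univ.filter
      (fun p : Fin n × Fin d => psum a (p.1 : ℕ) ≤ (p.2 : ℕ) ∧ (p.2 : ℕ) < psum a ((p.1 : ℕ) + 1)),
    Finsupp.single p 1

/-- The exponent vector of the standard polarization `pol(x^a) = ∏_i x_{i,1} ⋯ x_{i,a_i}`. -/
noncomputable def polExp {n : ℕ} (d : ℕ) (a : Fin n →₀ ℕ) : (Fin n × Fin d) →₀ ℕ :=
  ∑ p ∈ Finset.univ.filter (fun p : Fin n × Fin d => (p.2 : ℕ) < a p.1), Finsupp.single p 1

/-- `B(I)`, generated by `B(m)` for minimal generators `m` of `I`. -/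
noncomputable def boxIdeal {n : ℕ} {k : Type} [CommRing k] (d : ℕ) (I : Ideal (MvPolynomial (Fin n) k)) :
    Ideal (MvPolynomial (Fin n × Fin d) k) :=
  Ideal.span {q | ∃ a : Fin n →₀ ℕ, IsMinGen I a ∧ q = monomial (boxExp d a) 1}

/-- The sequence `Θ = (x_{i,1} - x_{i,j})_{1 ≤ i ≤ n, 2 ≤ j ≤ d}` (0-indexed: `j ≥ 1`). -/
noncomputable def thetaList (n d : ℕ) (k : Type) [CommRing k] : List (MvPolynomial (Fin n × Fin d) k) :=
  (List.finRange n).flatMap fun i =>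
    ((List.finRange d).drop 1).map fun (j : Fin d) =>
      X (i, (⟨0, Nat.lt_of_le_of_lt (Nat.zero_le j.val) j.isLt⟩ : Fin d)) - X (i, j)

/-- The depolarization map `φ : Ŝ → S`, `x_{i,j} ↦ x_i`. -/
noncomputable def phi (n d : ℕ) (k : Type) [CommRing k] :
    MvPolynomial (Fin n × Fin d) k →ₐ[k] MvPolynomial (Fin n) k :=
  rename Prod.fst

/-! If `i` is the first index with `d_i > b_i`, then `d_{i-1} ≤ b_{i-1} ≤ b_i < d_i`, so `b_i + 1`
lies in the `i`-th block of `B(x^c)`: the generator `x_{i, b_i+1}` divides `B(x^c)`. -/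

lemma psum_mono {n : ℕ} (a : Fin n →₀ ℕ) : Monotone (psum a) := fun _ _ h =>
  Finset.sum_le_sum_of_subset fun j hj => by
    simp only [Finset.mem_filter, Finset.mem_univ, true_and] at hj ⊢
    omega

lemma psum_succ_of_le {n : ℕ} (a : Fin n →₀ ℕ) {i : ℕ} (h : n ≤ i) : psum a (i + 1) = psum a i := by
  rw [psum, psum, Finset.filter_true_of_mem fun j _ => by omega,
    Finset.filter_true_of_mem fun j _ => j.isLt.trans_le h]

lemma psum_le_degE {n : ℕ} (a : Fin n →₀ ℕ) (i : ℕ) : psum a i ≤ degE a := by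
  rw [degE, Finsupp.sum_fintype _ _ fun _ => rfl]
  exact Finset.sum_le_sum_of_subset (Finset.filter_subset _ _)

lemma boxExp_apply_ne_zero {n d : ℕ} (c : Fin n →₀ ℕ) {p : Fin n × Fin d}
    (h₁ : psum c p.1 ≤ p.2) (h₂ : (p.2 : ℕ) < psum c (p.1 + 1)) : boxExp d c p ≠ 0 := by
  rw [boxExp, Finsupp.finsetSum_apply]
  refine (Finset.sum_pos' (fun _ _ => Nat.zero_le _) ⟨p, ?_, by simp⟩).ne'
  simp [h₁, h₂]

theorem psum_dominates_of_box_not_mem_general (n d : ℕ) (k : Type) [Field k] (a c : Fin n →₀ ℕ)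
    (hdega : degE a < d)
    (hnot : (monomial (boxExp d c) 1 : MvPolynomial (Fin n × Fin d) k) ∉
      Ideal.span {q : MvPolynomial (Fin n × Fin d) k | ∃ i : Fin n,
        ∃ h : psum a ((i : ℕ) + 1) < d,
        q = X (i, (⟨psum a ((i : ℕ) + 1), h⟩ : Fin d))}) :
    ∀ i : ℕ, psum c i ≤ psum a i := by
  intro i
  induction i with
  | zero => simp [psum]
  | succ i ih =>
    by_contra! hlt
    have hin : i < n := by
      by_contra! hni
      have := psum_mono a (i.le_add_right 1)
      rw [psum_succ_of_le c hni] at hlt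
      omega
    have hd : psum a (i + 1) < d := (psum_le_degE a _).trans_lt hdega
    refine hnot (Ideal.mem_of_dvd _ ?_ (Ideal.subset_span ⟨⟨i, hin⟩, hd, rfl⟩))
    exact X_dvd_monomial.mpr <| Or.inr <|
      boxExp_apply_ne_zero c (ih.trans (psum_mono a (i.le_add_right 1))) hlt

/-- Claim 2.1: if `B(x^c)` is not in the ideal `(x_{i,b_i+1} ∣ 1 ≤ i ≤ n)`,
where `b` are the partial sums of `a`, then `b_i ≥ d_i` for all `i` (`d` the partial sums
of `c`). -/
theorem psum_dominates_of_box_not_mem (n d : ℕ) (k : Type) [Field k] (a c : Fin n →₀ ℕ)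
    (hdega : degE a < d) (hdegc : degE c ≤ d)
    (hnot : (monomial (boxExp d c) 1 : MvPolynomial (Fin n × Fin d) k) ∉
      Ideal.span {q : MvPolynomial (Fin n × Fin d) k | ∃ i : Fin n,
        ∃ h : psum a ((i : ℕ) + 1) < d,
        q = X (i, (⟨psum a ((i : ℕ) + 1), h⟩ : Fin d))}) :
    ∀ i : ℕ, psum c i ≤ psum a i :=
  psum_dominates_of_box_not_mem_general n d k a c hdega hnot

end Pol
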